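/- arXiv:1202.3501 — 2 statements merged into one kernel-verified Lean document; each statement's English description precedes it below -/
import Mathlib

section
/- Cut-elimination for M^Ω_k: If a sequent Γ of L_Ω is derivable in the system M^Ω_k, then Γ has a cut-free derivation in M^Ω_k (i.e. a derivation containing no instance of the cut rule, though it may still contain instances of the Ω̃_h-rules). -/
/-!
Cuts are eliminated one at a time, by induction on the cut formula, inside cut-free
derivations. Literal, propositional and modal cuts are reduced as usual: by inversion, or by
pushing the cut up through a derivation until the cut formula is principal. A cut on
`(μX.B)'` against `(¬μX.B)' = ν̃X.(¬B)'` becomes an instance of `Ω̃_h` with `h = lev B + 1`: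
its premise `Γ, (μX.B)'` is the left premise of the cut, and each side premise `Δ, Γ` comes
from the right premise by Ω-inversion, since a `ν̃`-formula is principal only in `Ω_h`, whose
premise for `Δ` is exactly `Δ, Γ`. Nothing is assumed about `M^Ω_{k-1}`.
-/

namespace OneVarMu

/-- Operator forms of the language `L_Ω` (one fixed variable `X`, written `var`).
`nut` is the auxiliary fixed-point connective `ν̃`; `L0` operator forms are the
`nut`-free ones. -/
inductive Form : Type
  | atom  : ℕ → Form          -- p_i
  | natom : ℕ → Form          -- p̄_i
  | var   : Form              -- X
  | and   : Form → Form → Form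
  | or    : Form → Form → Form
  | box   : Form → Form
  | dia   : Form → Form
  | mu    : Form → Form       -- μX.A
  | nu    : Form → Form       -- νX.A
  | nut   : Form → Form       -- ν̃X.A
  deriving DecidableEq

namespace Form

/-- Negation `¬A` (on `ν̃` we extend the `L0` definition as for `ν`). -/
def compl : Form → Form
  | atom i  => natom i
  | natom i => atom i
  | var     => var
  | and A B => or (compl A) (compl B)
  | or A B  => and (compl A) (compl B)
  | box A   => dia (compl A)
  | dia A   => box (compl A)
  | mu A    => nu (compl A)
  | nu A    => mu (compl A)
  | nut A   => mu (compl A)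

/-- `subst A B` is `A(B)`: substitute `B` for every free occurrence of `X` in `A`. -/
def subst : Form → Form → Form
  | atom i, _  => atom i
  | natom i, _ => natom i
  | var, B     => B
  | and A1 A2, B => and (subst A1 B) (subst A2 B)
  | or A1 A2, B  => or (subst A1 B) (subst A2 B)
  | box A, B   => box (subst A B)
  | dia A, B   => dia (subst A B)
  | mu A, _    => mu A
  | nu A, _    => nu A
  | nut A, _   => nut A

/-- The level of an operator form: maximal nesting of fixed-point operators. -/
def lev : Form → ℕ
  | atom _  => 0
  | natom _ => 0
  | var     => 0
  | and A B => max (lev A) (lev B)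
  | or A B  => max (lev A) (lev B)
  | box A   => lev A
  | dia A   => lev A
  | mu A    => lev A + 1
  | nu A    => lev A + 1
  | nut A   => lev A + 1

/-- `A'`: replace every occurrence of `νX` by `ν̃X`. -/
def prime : Form → Form
  | atom i  => atom i
  | natom i => natom i
  | var     => var
  | and A B => and (prime A) (prime B)
  | or A B  => or (prime A) (prime B)
  | box A   => box (prime A)
  | dia A   => dia (prime A)
  | mu A    => mu (prime A)
  | nu A    => nut (prime A)
  | nut A   => nut (prime A)

/-- `A` is an operator form of `L0`, i.e. contains no `ν̃`. -/
def IsL0 : Form → Prop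
  | and A B => IsL0 A ∧ IsL0 B
  | or A B  => IsL0 A ∧ IsL0 B
  | box A   => IsL0 A
  | dia A   => IsL0 A
  | mu A    => IsL0 A
  | nu A    => IsL0 A
  | nut _   => False
  | _       => True

/-- `A` has no free occurrence of the variable `X`, i.e. `A` is a formula. -/
def ClosedF : Form → Prop
  | var     => False
  | and A B => ClosedF A ∧ ClosedF B
  | or A B  => ClosedF A ∧ ClosedF B
  | box A   => ClosedF A
  | dia A   => ClosedF A
  | _       => True

/-- `⊤ := p ∨ p̄` for a fixed atomic proposition. -/
def top : Form := or (atom 0) (natom 0)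

/-- Finite iterations `A^i(⊤)`. -/
def iter (A : Form) : ℕ → Form
  | 0     => top
  | n + 1 => subst A (iter A n)

/-- `OccursIn A B`: the operator form `A` occurs (as a subterm) in `B`. -/
def OccursIn (A : Form) : Form → Prop
  | atom i  => A = atom i
  | natom i => A = natom i
  | var     => A = var
  | and C D => A = and C D ∨ OccursIn A C ∨ OccursIn A D
  | or C D  => A = or C D ∨ OccursIn A C ∨ OccursIn A D
  | box C   => A = box C ∨ OccursIn A C
  | dia C   => A = dia C ∨ OccursIn A C
  | mu C    => A = mu C ∨ OccursIn A C
  | nu C    => A = nu C ∨ OccursIn A C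
  | nut C   => A = nut C ∨ OccursIn A C

/-- `replace t r A`: simultaneously replace every occurrence of `t` in `A` by `r`. -/
def replace (t r : Form) : Form → Form
  | and A B => if and A B = t then r else and (replace t r A) (replace t r B)
  | or A B  => if or A B = t then r else or (replace t r A) (replace t r B)
  | box A   => if box A = t then r else box (replace t r A)
  | dia A   => if dia A = t then r else dia (replace t r A)
  | mu A    => if mu A = t then r else mu (replace t r A)
  | nu A    => if nu A = t then r else nu (replace t r A)
  | nut A   => if nut A = t then r else nut (replace t r A)
  | A       => if A = t then r else A

end Form

/-- Sequents are finite sets of formulae. -/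
abbrev Sequent := Finset Form

/-- Every member is a formula (no free `X`): a sequent of `L_Ω`. -/
def ClosedSeq (Γ : Sequent) : Prop := ∀ C ∈ Γ, C.ClosedF

/-- A sequent of `L0`: every member is a `ν̃`-free formula. -/
def L0Seq (Γ : Sequent) : Prop := ∀ C ∈ Γ, C.IsL0 ∧ C.ClosedF

/-- `Γ` is `h`-positive: every `ν̃X.A` occurring in it has level `< h`. -/
def Positive (h : ℕ) (Γ : Sequent) : Prop :=
  ∀ C ∈ Γ, ∀ B : Form, Form.OccursIn (Form.nut B) C → Form.lev (Form.nut B) < h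

/-- Every formula of the sequent has level `≤ k`. -/
def SeqLevLE (k : ℕ) (Γ : Sequent) : Prop := ∀ C ∈ Γ, C.lev ≤ k

/-- The infinitary cut-free system `K_ω`. -/
inductive KDer : Sequent → Prop
  | ax (Γ : Sequent) (i : ℕ) :
      KDer (insert (Form.atom i) (insert (Form.natom i) Γ))
  | orR (Γ : Sequent) (A B : Form) :
      KDer (insert A (insert B Γ)) → KDer (insert (Form.or A B) Γ)
  | andR (Γ : Sequent) (A B : Form) :
      KDer (insert A Γ) → KDer (insert B Γ) → KDer (insert (Form.and A B) Γ)
  | boxR (Γ S : Sequent) (A : Form) :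
      KDer (insert A Γ) → KDer (Γ.image Form.dia ∪ insert (Form.box A) S)
  | clo (Γ : Sequent) (A : Form) :
      KDer (insert (Form.subst A (Form.mu A)) Γ) → KDer (insert (Form.mu A) Γ)
  | nuR (Γ : Sequent) (A : Form) :
      (∀ i : ℕ, KDer (insert (Form.iter A i) Γ)) → KDer (insert (Form.nu A) Γ)

/-- The finitary system `M` (with induction rule and cut). -/
inductive MDer : Sequent → Prop
  | ax (Γ : Sequent) (i : ℕ) :
      MDer (insert (Form.atom i) (insert (Form.natom i) Γ))
  | axMu (Γ : Sequent) (A : Form) :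
      MDer (insert (Form.mu A) (insert (Form.compl (Form.mu A)) Γ))
  | orR (Γ : Sequent) (A B : Form) :
      MDer (insert A (insert B Γ)) → MDer (insert (Form.or A B) Γ)
  | andR (Γ : Sequent) (A B : Form) :
      MDer (insert A Γ) → MDer (insert B Γ) → MDer (insert (Form.and A B) Γ)
  | boxR (Γ S : Sequent) (A : Form) :
      MDer (insert A Γ) → MDer (Γ.image Form.dia ∪ insert (Form.box A) S)
  | clo (Γ : Sequent) (A : Form) :
      MDer (insert (Form.subst A (Form.mu A)) Γ) → MDer (insert (Form.mu A) Γ)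
  | ind (A B : Form) :
      MDer (insert (Form.compl (Form.subst A B)) {B}) →
      MDer (insert (Form.compl (Form.mu A)) {B})
  | cut (Γ : Sequent) (A : Form) :
      A.IsL0 → A.ClosedF →
      MDer (insert A Γ) → MDer (insert (Form.compl A) Γ) → MDer Γ

/-- The finitary system `M`, with the extra recording that every sequent occurring
in the proof (i.e. the conclusion of every subderivation) has level `≤ k`. -/
inductive MDerB (k : ℕ) : Sequent → Prop
  | ax (Γ : Sequent) (i : ℕ) :
      SeqLevLE k (insert (Form.atom i) (insert (Form.natom i) Γ)) →
      MDerB k (insert (Form.atom i) (insert (Form.natom i) Γ))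
  | axMu (Γ : Sequent) (A : Form) :
      SeqLevLE k (insert (Form.mu A) (insert (Form.compl (Form.mu A)) Γ)) →
      MDerB k (insert (Form.mu A) (insert (Form.compl (Form.mu A)) Γ))
  | orR (Γ : Sequent) (A B : Form) :
      SeqLevLE k (insert (Form.or A B) Γ) →
      MDerB k (insert A (insert B Γ)) → MDerB k (insert (Form.or A B) Γ)
  | andR (Γ : Sequent) (A B : Form) :
      SeqLevLE k (insert (Form.and A B) Γ) →
      MDerB k (insert A Γ) → MDerB k (insert B Γ) → MDerB k (insert (Form.and A B) Γ)
  | boxR (Γ S : Sequent) (A : Form) :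
      SeqLevLE k (Γ.image Form.dia ∪ insert (Form.box A) S) →
      MDerB k (insert A Γ) → MDerB k (Γ.image Form.dia ∪ insert (Form.box A) S)
  | clo (Γ : Sequent) (A : Form) :
      SeqLevLE k (insert (Form.mu A) Γ) →
      MDerB k (insert (Form.subst A (Form.mu A)) Γ) → MDerB k (insert (Form.mu A) Γ)
  | ind (A B : Form) :
      SeqLevLE k (insert (Form.compl (Form.mu A)) {B}) →
      MDerB k (insert (Form.compl (Form.subst A B)) {B}) →
      MDerB k (insert (Form.compl (Form.mu A)) {B})
  | cut (Γ : Sequent) (A : Form) :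
      A.IsL0 → A.ClosedF → SeqLevLE k Γ →
      MDerB k (insert A Γ) → MDerB k (insert (Form.compl A) Γ) → MDerB k Γ

/-- Derivations of the system `M^Ω_k`, relative to a predicate `prev` expressing
cut-free derivability in `M^Ω_{k-1}`.  The boolean index is `true` if instances
of cut are allowed and `false` for cut-free derivations. -/
inductive OmDerAux (prev : Sequent → Prop) (k : ℕ) : Bool → Sequent → Prop
  | ax (c : Bool) (Γ : Sequent) (i : ℕ) :
      OmDerAux prev k c (insert (Form.atom i) (insert (Form.natom i) Γ))
  | orR (c : Bool) (Γ : Sequent) (A B : Form) :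
      OmDerAux prev k c (insert A (insert B Γ)) →
      OmDerAux prev k c (insert (Form.or A B) Γ)
  | andR (c : Bool) (Γ : Sequent) (A B : Form) :
      OmDerAux prev k c (insert A Γ) → OmDerAux prev k c (insert B Γ) →
      OmDerAux prev k c (insert (Form.and A B) Γ)
  | boxR (c : Bool) (Γ S : Sequent) (A : Form) :
      OmDerAux prev k c (insert A Γ) →
      OmDerAux prev k c (Γ.image Form.dia ∪ insert (Form.box A) S)
  | clo (c : Bool) (Γ : Sequent) (A : Form) :
      OmDerAux prev k c (insert (Form.subst A (Form.mu A)) Γ) →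
      OmDerAux prev k c (insert (Form.mu A) Γ)
  | nuR (c : Bool) (Γ : Sequent) (A : Form) :
      (∀ i : ℕ, OmDerAux prev k c (insert (Form.iter A i) Γ)) →
      OmDerAux prev k c (insert (Form.nu A) Γ)
  | cut (Γ : Sequent) (A : Form) :
      A.IsL0 → A.ClosedF → A.lev ≤ k →
      OmDerAux prev k true (insert (Form.prime A) Γ) →
      OmDerAux prev k true (insert (Form.prime (Form.compl A)) Γ) →
      OmDerAux prev k true Γ
  | omega (c : Bool) (Γ : Sequent) (A : Form) (h : ℕ) :
      1 ≤ h → h ≤ k → A.IsL0 →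
      Form.lev (Form.prime (Form.compl (Form.mu A))) = h →
      (∀ Δ : Sequent, ClosedSeq Δ → Positive h Δ →
        prev (insert (Form.prime (Form.mu A)) Δ) → OmDerAux prev k c (Δ ∪ Γ)) →
      OmDerAux prev k c (insert (Form.prime (Form.compl (Form.mu A))) Γ)
  | omegaT (c : Bool) (Γ : Sequent) (A : Form) (h : ℕ) :
      1 ≤ h → h ≤ k → A.IsL0 →
      Form.lev (Form.prime (Form.compl (Form.mu A))) = h →
      OmDerAux prev k c (insert (Form.prime (Form.mu A)) Γ) →
      (∀ Δ : Sequent, ClosedSeq Δ → Positive h Δ →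
        prev (insert (Form.prime (Form.mu A)) Δ) → OmDerAux prev k c (Δ ∪ Γ)) →
      OmDerAux prev k c Γ

/-- `OmProv k c Γ`: the sequent `Γ` is derivable in `M^Ω_k`
(cut-free when `c = false`). -/
def OmProv : ℕ → Bool → Sequent → Prop
  | 0     => OmDerAux (fun _ => False) 0
  | k + 1 => OmDerAux (fun Δ => OmProv k false Δ) (k + 1)

namespace Form

theorem lev_prime (A : Form) : A.prime.lev = A.lev := by
  induction A <;> simp [prime, lev, *]

theorem lev_compl (A : Form) : A.compl.lev = A.lev := by
  induction A <;> simp [compl, lev, *]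

theorem IsL0.compl {A : Form} (hA : A.IsL0) : A.compl.IsL0 := by
  induction A <;> simp_all [Form.compl, IsL0]

theorem compl_compl {A : Form} (hA : A.IsL0) : A.compl.compl = A := by
  induction A <;> simp_all [compl, IsL0]

theorem prime_inj {A B : Form} (hA : A.IsL0) (hB : B.IsL0) (h : A.prime = B.prime) :
    A = B := by
  induction A generalizing B <;> cases B <;> grind [prime, IsL0]

end Form

section CutElimination

open Form

abbrev CutFree (prev : Sequent → Prop) (k : ℕ) : Sequent → Prop := OmDerAux prev k false

variable {prev : Sequent → Prop} {k : ℕ}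

/-- Every rule in which `o` is not principal survives erasing `o` from its conclusion;
the hypotheses handle the rules in which `o` is principal. `Q` is a side condition on the
new context, to be preserved when the context grows. -/
theorem CutFree.of_erase_subset (o : Form) (Q : Sequent → Prop)
    (hQ : ∀ ⦃T T' : Sequent⦄, T ⊆ T' → Q T → Q T')
    (hmu : ∀ A, o ≠ mu A) (hnu : ∀ A, o ≠ nu A)
    (hax : ∀ (i : ℕ) (Γ T : Sequent), o = atom i ∨ o = natom i →
      (insert (atom i) (insert (natom i) Γ)).erase o ⊆ T → Q T → CutFree prev k T)
    (hor : ∀ (A B : Form) (Γ T : Sequent), o = Form.or A B →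
      (∀ T' : Sequent, (insert A (insert B Γ)).erase o ⊆ T' → Q T' → CutFree prev k T') →
      Γ.erase o ⊆ T → Q T → CutFree prev k T)
    (hand : ∀ (A B : Form) (Γ T : Sequent), o = Form.and A B →
      (∀ T' : Sequent, (insert A Γ).erase o ⊆ T' → Q T' → CutFree prev k T') →
      (∀ T' : Sequent, (insert B Γ).erase o ⊆ T' → Q T' → CutFree prev k T') →
      Γ.erase o ⊆ T → Q T → CutFree prev k T)
    (hbox : ∀ (Γ S : Sequent) (A : Form) (T : Sequent), o = box A ∨ o ∈ Γ.image dia →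
      CutFree prev k (insert A Γ) → (Γ.image dia ∪ insert (box A) S).erase o ⊆ T → Q T →
      CutFree prev k T)
    (homega : ∀ (A : Form) (Γ T : Sequent), o = (Form.compl (mu A)).prime → A.IsL0 →
      (∀ Δ : Sequent, ClosedSeq Δ → Positive o.lev Δ → prev (insert (mu A).prime Δ) →
        ∀ T' : Sequent, (Δ ∪ Γ).erase o ⊆ T' → Q T' → CutFree prev k T') →
      Γ.erase o ⊆ T → Q T → CutFree prev k T)
    {Θ T : Sequent} (hΘ : CutFree prev k Θ) (hT : Θ.erase o ⊆ T) (hQT : Q T) :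
    CutFree prev k T := by
  unfold CutFree at hΘ
  generalize hc : false = c at hΘ
  induction hΘ generalizing T with
  | ax _ Γ i =>
    by_cases ho : o = atom i ∨ o = natom i
    · exact hax i Γ T ho hT hQT
    · convert OmDerAux.ax false T i using 1
      grind
  | orR _ Γ A B _ ih =>
    by_cases ho : o = Form.or A B
    · subst ho
      exact hor A B Γ T rfl (fun T' hT' hQT' => ih hT' hQT' hc) (by grind) hQT
    · convert OmDerAux.orR false T A B (ih (T := insert A (insert B T)) (by grind)
        (hQ (by grind) hQT) hc) using 1
      grind
  | andR _ Γ A B _ _ ihA ihB =>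
    by_cases ho : o = Form.and A B
    · subst ho
      exact hand A B Γ T rfl (fun T' hT' hQT' => ihA hT' hQT' hc)
        (fun T' hT' hQT' => ihB hT' hQT' hc) (by grind) hQT
    · convert OmDerAux.andR false T A B
        (ihA (T := insert A T) (by grind) (hQ (by grind) hQT) hc)
        (ihB (T := insert B T) (by grind) (hQ (by grind) hQT) hc) using 1
      grind
  | boxR _ Γ S A hA _ =>
    subst hc
    by_cases ho : o = box A ∨ o ∈ Γ.image dia
    · exact hbox Γ S A T ho hA hT hQT
    · convert OmDerAux.boxR false Γ T A hA using 1
      grind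
  | clo _ Γ A _ ih =>
    convert OmDerAux.clo false T A (ih (T := insert (subst A (mu A)) T) (by grind)
        (hQ (by grind) hQT) hc) using 1
    grind
  | nuR _ Γ A _ ih =>
    convert OmDerAux.nuR false T A (fun i => ih i (T := insert (iter A i) T) (by grind)
        (hQ (by grind) hQT) hc) using 1
    grind
  | cut => cases hc
  | omega _ Γ A h h1 hk hA hlev _ ih =>
    by_cases ho : o = (Form.compl (mu A)).prime
    · subst ho hlev
      exact homega A Γ T rfl hA
        (fun Δ hΔ hpos hprev T' hT' hQT' => ih Δ hΔ hpos hprev hT' hQT' hc) (by grind) hQT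
    · convert OmDerAux.omega false T A h h1 hk hA hlev
        (fun Δ hΔ hpos hprev => ih Δ hΔ hpos hprev (T := Δ ∪ T) (by grind)
          (hQ (by grind) hQT) hc) using 1
      grind
  | omegaT _ Γ A h h1 hk hA hlev _ _ ihμ ih =>
    exact OmDerAux.omegaT false T A h h1 hk hA hlev (ihμ (T := insert (mu A).prime T)
        (by grind) (hQ (by grind) hQT) hc)
      (fun Δ hΔ hpos hprev => ih Δ hΔ hpos hprev (T := Δ ∪ T) (by grind)
          (hQ (by grind) hQT) hc)

-- `X` is never principal, so erasing it is plain weakening.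
theorem CutFree.mono {Θ T : Sequent} (h : CutFree prev k Θ) (hΘT : Θ ⊆ T) :
    CutFree prev k T :=
  CutFree.of_erase_subset var (fun _ => True) (fun _ _ _ _ => trivial) (by simp) (by simp)
    (by simp) (by simp) (by simp) (by simp) (by simp [Form.compl, Form.prime]) h
    ((Finset.erase_subset _ _).trans hΘT) trivial

def CutAdmissible (prev : Sequent → Prop) (k : ℕ) (A B : Form) : Prop :=
  ∀ Γ : Sequent,
    CutFree prev k (insert A Γ) → CutFree prev k (insert B Γ) → CutFree prev k Γ

theorem CutAdmissible.symm {A B : Form} (h : CutAdmissible prev k A B) :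
    CutAdmissible prev k B A :=
  fun Γ hB hA => h Γ hA hB

theorem cutAdmissible_atom (i : ℕ) : CutAdmissible prev k (atom i) (natom i) := by
  intro Γ hpos hneg
  refine CutFree.of_erase_subset (atom i) (Γ ⊆ ·) (fun _ _ h₁ h₂ => h₂.trans h₁)
    (by simp) (by simp) ?_ (by simp) (by simp) (by simp) (by simp [Form.compl, Form.prime])
    hpos (Finset.erase_insert_subset _ _) subset_rfl
  rintro j Γ' T (h | h) hT hΓT
  · cases h
    exact hneg.mono (Finset.insert_subset (by grind) hΓT)
  · cases h

theorem CutFree.of_or {A B : Form} {Γ : Sequent}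
    (h : CutFree prev k (insert (Form.or A B) Γ)) : CutFree prev k (insert A (insert B Γ)) := by
  refine CutFree.of_erase_subset (Form.or A B) (fun T => A ∈ T ∧ B ∈ T)
    (fun _ _ h₁ h₂ => ⟨h₁ h₂.1, h₁ h₂.2⟩) (by simp) (by simp) (by simp) ?_ (by simp)
    (by simp) (by simp [Form.compl, Form.prime]) h (by grind) (by simp)
  rintro A' B' Γ' T ho ih hT hABT
  cases ho
  exact ih T (by grind only [Finset.subset_iff, Finset.mem_erase, Finset.mem_insert]) hABT

theorem CutFree.of_and {A B : Form} {Γ : Sequent}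
    (h : CutFree prev k (insert (Form.and A B) Γ)) :
    CutFree prev k (insert A Γ) ∧ CutFree prev k (insert B Γ) := by
  have key (T : Sequent) (hΓT : Γ ⊆ T) (hT : A ∈ T ∨ B ∈ T) : CutFree prev k T := by
    refine CutFree.of_erase_subset (Form.and A B) (fun T => A ∈ T ∨ B ∈ T)
      (fun _ _ h₁ h₂ => h₂.imp (@h₁ _) (@h₁ _)) (by simp) (by simp) (by simp) (by simp) ?_
      (by simp) (by simp [Form.compl, Form.prime]) h (by grind) hT
    rintro A' B' Γ' T ho ihA ihB hT (hAT | hBT)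
    all_goals cases ho
    · exact ihA T (by grind) (Or.inl hAT)
    · exact ihB T (by grind) (Or.inr hBT)
  exact ⟨key _ (Finset.subset_insert _ _) (by simp), key _ (Finset.subset_insert _ _) (by simp)⟩

theorem CutAdmissible.and_or {A₁ A₂ B₁ B₂ : Form} (h₁ : CutAdmissible prev k A₁ B₁)
    (h₂ : CutAdmissible prev k A₂ B₂) :
    CutAdmissible prev k (Form.and A₁ A₂) (Form.or B₁ B₂) := by
  intro Γ hand hor
  obtain ⟨hA₁, hA₂⟩ := hand.of_and
  exact h₂ Γ hA₂ (h₁ (insert B₂ Γ) (hA₁.mono (by grind)) hor.of_or)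

-- `◇c` is removed where a `□`-rule introduces it, by cutting `c` there against the premise
-- `b, Γ₀` of the `□b` being eliminated.
theorem CutFree.erase_dia {b c : Form} {Γ₀ Θ T : Sequent} (hΘ : CutFree prev k Θ)
    (hbc : CutAdmissible prev k b c) (hb : CutFree prev k (insert b Γ₀))
    (hT : Θ.erase (dia c) ⊆ T) (hΓ₀T : Γ₀.image dia ⊆ T) : CutFree prev k T := by
  refine CutFree.of_erase_subset (dia c) (Γ₀.image dia ⊆ ·)
    (fun _ _ h₁ h₂ => h₂.trans h₁) (by simp) (by simp) (by simp) (by simp) (by simp) ?_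
    (by simp [Form.compl, Form.prime]) hΘ hT hΓ₀T
  rintro Γ S A T (h | h) hA hT hΓ₀T
  · cases h
  have hc : c ∈ Γ := by simpa using h
  have hcut : CutFree prev k (insert A (Γ.erase c ∪ Γ₀)) :=
    hbc _ (hb.mono (by grind)) (hA.mono (by grind))
  convert OmDerAux.boxR false (Γ.erase c ∪ Γ₀) T A hcut using 1
  grind

theorem CutAdmissible.box_dia {b c : Form} (h : CutAdmissible prev k b c) :
    CutAdmissible prev k (box b) (dia c) := by
  intro Γ hbox hdia
  refine CutFree.of_erase_subset (box b) (fun T => CutFree prev k (insert (dia c) T))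
    (fun _ _ hTT' hT => hT.mono (Finset.insert_subset_insert _ hTT')) (by simp) (by simp)
    (by simp) (by simp) (by simp) ?_ (by simp [Form.compl, Form.prime]) hbox
    (Finset.erase_insert_subset _ _) hdia
  rintro Γ' S A T (ho | ho) hA hT hdiaT
  · cases ho
    exact hdiaT.erase_dia h hA (Finset.erase_insert_subset _ _) (by grind)
  · simp at ho

theorem CutFree.omega_inv {B : Form} (hB : B.IsL0) {Δ Γ : Sequent} (hΔ : ClosedSeq Δ)
    (hpos : Positive (Form.compl (mu B)).prime.lev Δ) (hprev : prev (insert (mu B).prime Δ))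
    (h : CutFree prev k (insert (Form.compl (mu B)).prime Γ)) : CutFree prev k (Δ ∪ Γ) := by
  refine CutFree.of_erase_subset (Form.compl (mu B)).prime (Δ ⊆ ·)
    (fun _ _ h₁ h₂ => h₂.trans h₁) ?_ ?_ ?_ ?_ ?_ ?_ ?_ h (by grind)
    Finset.subset_union_left
  iterate 6 simp [Form.compl, Form.prime]
  rintro A Γ' T ho hA ih hT hΔT
  have hBA : B = A := by
    have : (Form.compl B).prime = (Form.compl A).prime := by
      simpa [Form.compl, Form.prime] using ho
    simpa [compl_compl hA, compl_compl hB] using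
      congrArg Form.compl (prime_inj hB.compl hA.compl this)
  subst hBA
  exact ih Δ hΔ hpos hprev T (by grind) hΔT

theorem cutAdmissible_mu {B : Form} (hB : B.IsL0) (hlev : B.lev < k) :
    CutAdmissible prev k (mu B).prime (Form.compl (mu B)).prime := by
  intro Γ hμ hν
  have hlev' : (Form.compl (mu B)).prime.lev = B.lev + 1 := by
    simp [lev_prime, lev_compl, lev]
  exact OmDerAux.omegaT false Γ B _ (by omega) (by omega) hB rfl hμ
    fun Δ hΔ hpos hprev => hν.omega_inv hB hΔ hpos hprev

theorem cutAdmissible_prime {A : Form} (hA : A.IsL0) (hcl : A.ClosedF) (hlev : A.lev ≤ k) :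
    CutAdmissible prev k A.prime (Form.compl A).prime := by
  induction A with
  | atom i => exact cutAdmissible_atom i
  | natom i => exact (cutAdmissible_atom i).symm
  | var => cases hcl
  | and A B ihA ihB =>
    exact (ihA hA.1 hcl.1 (le_of_max_le_left hlev)).and_or
      (ihB hA.2 hcl.2 (le_of_max_le_right hlev))
  | or A B ihA ihB =>
    exact ((ihA hA.1 hcl.1 (le_of_max_le_left hlev)).symm.and_or
      (ihB hA.2 hcl.2 (le_of_max_le_right hlev)).symm).symm
  | box A ih => exact (ih hA hcl hlev).box_dia
  | dia A ih => exact (ih hA hcl hlev).symm.box_dia.symm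
  | mu A _ => exact cutAdmissible_mu hA hlev
  | nu A _ =>
    have hA' : A.IsL0 := hA
    simpa [Form.compl, Form.prime, compl_compl hA'] using
      (cutAdmissible_mu (prev := prev) hA'.compl ((lev_compl A).trans_lt hlev)).symm
  | nut A _ => cases hA

theorem OmDerAux.cutFree {c : Bool} {Γ : Sequent} (h : OmDerAux prev k c Γ) :
    CutFree prev k Γ := by
  induction h with
  | ax _ Γ i => exact .ax false Γ i
  | orR _ Γ A B _ ih => exact .orR false Γ A B ih
  | andR _ Γ A B _ _ ihA ihB => exact .andR false Γ A B ihA ihB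
  | boxR _ Γ S A _ ih => exact .boxR false Γ S A ih
  | clo _ Γ A _ ih => exact .clo false Γ A ih
  | nuR _ Γ A _ ih => exact .nuR false Γ A ih
  | cut Γ A hA hcl hlev _ _ ih₁ ih₂ => exact cutAdmissible_prime hA hcl hlev Γ ih₁ ih₂
  | omega _ Γ A h h1 hk hA hlev _ ih => exact .omega false Γ A h h1 hk hA hlev ih
  | omegaT _ Γ A h h1 hk hA hlev _ _ ihμ ih => exact .omegaT false Γ A h h1 hk hA hlev ihμ ih

end CutElimination

theorem stmt9_general (k : ℕ) (Γ : Sequent)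
    (hd : OmProv k true Γ) : OmProv k false Γ := by
  cases k <;> exact OmDerAux.cutFree hd

/-- Cut-elimination for `M^Ω_k`: every sequent derivable in `M^Ω_k`
has a cut-free derivation in `M^Ω_k`. -/
theorem stmt9 (k : ℕ) (Γ : Sequent) (hΓ : ClosedSeq Γ)
    (hd : OmProv k true Γ) : OmProv k false Γ :=
  stmt9_general k Γ hd

end OneVarMu
end

section
/- Collapsing Lemma: Let h ≤ k and let Γ be an (h+1)-positive sequent of L_Ω. If Γ has a cut-free derivation in M^Ω_k, then Γ has a cut-free derivation in M^Ω_h. -/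
namespace OneVarMu

namespace Form

def IsPositive (h : ℕ) (A : Form) : Prop :=
  ∀ B : Form, OccursIn (nut B) A → lev (nut B) < h

variable {h : ℕ} {A B : Form}

@[simp] lemma isPositive_atom (i : ℕ) : IsPositive h (atom i) := by
  simp [IsPositive, OccursIn]

@[simp] lemma isPositive_natom (i : ℕ) : IsPositive h (natom i) := by
  simp [IsPositive, OccursIn]

@[simp] lemma isPositive_var : IsPositive h var := by
  simp [IsPositive, OccursIn]

@[simp] lemma isPositive_and :
    IsPositive h (and A B) ↔ IsPositive h A ∧ IsPositive h B := by
  simp [IsPositive, OccursIn, or_imp, forall_and]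

@[simp] lemma isPositive_or : IsPositive h (or A B) ↔ IsPositive h A ∧ IsPositive h B := by
  simp [IsPositive, OccursIn, or_imp, forall_and]

@[simp] lemma isPositive_box : IsPositive h (box A) ↔ IsPositive h A := by
  simp [IsPositive, OccursIn]

@[simp] lemma isPositive_dia : IsPositive h (dia A) ↔ IsPositive h A := by
  simp [IsPositive, OccursIn]

@[simp] lemma isPositive_mu : IsPositive h (mu A) ↔ IsPositive h A := by
  simp [IsPositive, OccursIn]

@[simp] lemma isPositive_nu : IsPositive h (nu A) ↔ IsPositive h A := by
  simp [IsPositive, OccursIn]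

@[simp] lemma isPositive_nut : IsPositive h (nut A) ↔ lev A + 1 < h ∧ IsPositive h A := by
  simp [IsPositive, OccursIn, or_imp, forall_and, lev]

lemma IsPositive.lev_lt (hA : IsPositive h (nut A)) : lev (nut A) < h :=
  (isPositive_nut.1 hA).1

lemma IsPositive.mono {h' : ℕ} (hh : h ≤ h') (hA : IsPositive h A) : IsPositive h' A :=
  fun B hB => (hA B hB).trans_le hh

lemma isPositive_lev_succ : ∀ A : Form, IsPositive (lev A + 1) A
  | atom _ | natom _ | var => by simp
  | and A B | or A B => by
    simp only [isPositive_and, isPositive_or, lev]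
    exact ⟨(isPositive_lev_succ A).mono (by omega), (isPositive_lev_succ B).mono (by omega)⟩
  | box A | dia A => by simpa [lev] using isPositive_lev_succ A
  | mu A | nu A => by simpa [lev] using (isPositive_lev_succ A).mono (by omega)
  | nut A => by simpa [lev] using (isPositive_lev_succ A).mono (by omega)

lemma IsPositive.subst (hA : IsPositive h A) (hB : IsPositive h B) :
    IsPositive h (subst A B) := by
  induction A <;> simp_all [Form.subst]

lemma isPositive_iter (hA : IsPositive h A) : ∀ i, IsPositive h (iter A i)
  | 0 => by simp [iter, top]
  | i + 1 => hA.subst (isPositive_iter hA i)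

lemma closedF_subst (A : Form) (hB : ClosedF B) : ClosedF (subst A B) := by
  induction A <;> simp_all [Form.subst, ClosedF]

lemma closedF_iter (A : Form) : ∀ i, ClosedF (iter A i)
  | 0 => ⟨trivial, trivial⟩
  | i + 1 => closedF_subst A (closedF_iter A i)

@[simp] lemma lev_prime_s10 (A : Form) : lev (prime A) = lev A := by
  induction A <;> simp [prime, lev, *]

@[simp] lemma lev_compl_s10 (A : Form) : lev (compl A) = lev A := by
  induction A <;> simp [compl, lev, *]

lemma isPositive_prime_mu (A : Form) :
    IsPositive (lev (prime (compl (mu A)))) (prime (mu A)) := by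
  simpa [prime, compl, lev] using isPositive_lev_succ (prime A)

end Form

open Form

lemma closedSeq_insert_iff {A : Form} {Γ : Sequent} :
    ClosedSeq (insert A Γ) ↔ A.ClosedF ∧ ClosedSeq Γ :=
  Finset.forall_mem_insert _ _ _

lemma closedSeq_union_iff {Γ Δ : Sequent} :
    ClosedSeq (Γ ∪ Δ) ↔ ClosedSeq Γ ∧ ClosedSeq Δ :=
  Finset.forall_mem_union

lemma positive_insert_iff {h : ℕ} {A : Form} {Γ : Sequent} :
    Positive h (insert A Γ) ↔ A.IsPositive h ∧ Positive h Γ :=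
  Finset.forall_mem_insert _ _ _

lemma positive_union_iff {h : ℕ} {Γ Δ : Sequent} :
    Positive h (Γ ∪ Δ) ↔ Positive h Γ ∧ Positive h Δ :=
  Finset.forall_mem_union

lemma closedSeq_image_dia_iff {Γ : Sequent} : ClosedSeq (Γ.image dia) ↔ ClosedSeq Γ :=
  Finset.forall_mem_image

lemma positive_image_dia_iff {h : ℕ} {Γ : Sequent} :
    Positive h (Γ.image dia) ↔ Positive h Γ :=
  Finset.forall_mem_image.trans (forall₂_congr fun _ _ => isPositive_dia)

lemma Positive.mono {h h' : ℕ} {Γ : Sequent} (hh : h ≤ h') (hΓ : Positive h Γ) :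
    Positive h' Γ :=
  fun C hC => IsPositive.mono hh (hΓ C hC)

lemma positive_insert_prime_mu {h : ℕ} {A : Form} {Δ : Sequent}
    (hlev : lev (prime (Form.compl (mu A))) ≤ h) (hΔ : Positive h Δ) :
    Positive h (insert (prime (mu A)) Δ) :=
  positive_insert_iff.2 ⟨(isPositive_prime_mu A).mono hlev, hΔ⟩

namespace OmDerAux

variable {prev prev' : Sequent → Prop} {k : ℕ}

theorem mono {n : ℕ} {c : Bool} {Γ : Sequent} (hkn : k ≤ n)
    (hprev : 0 < k → ∀ Δ, ClosedSeq Δ → Positive k Δ → prev' Δ → prev Δ)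
    (hd : OmDerAux prev k c Γ) : OmDerAux prev' n c Γ := by
  induction hd with
  | ax c Γ i => exact .ax c Γ i
  | orR c Γ A B _ ih => exact .orR c Γ A B ih
  | andR c Γ A B _ _ ih₁ ih₂ => exact .andR c Γ A B ih₁ ih₂
  | boxR c Γ S A _ ih => exact .boxR c Γ S A ih
  | clo c Γ A _ ih => exact .clo c Γ A ih
  | nuR c Γ A _ ih => exact .nuR c Γ A ih
  | cut Γ A hA₀ hAc hAk _ _ ih₁ ih₂ => exact .cut Γ A hA₀ hAc (hAk.trans hkn) ih₁ ih₂
  | omega c Γ A h₀ h₁ hk hA₀ hlev _ ih =>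
    refine .omega c Γ A h₀ h₁ (hk.trans hkn) hA₀ hlev
      fun Δ hΔc hΔp hΔ => ih Δ hΔc hΔp ?_
    exact hprev (by omega) _ (closedSeq_insert_iff.2 ⟨trivial, hΔc⟩)
      ((positive_insert_prime_mu hlev.le hΔp).mono hk) hΔ
  | omegaT c Γ A h₀ h₁ hk hA₀ hlev _ _ ihmaj ih =>
    refine .omegaT c Γ A h₀ h₁ (hk.trans hkn) hA₀ hlev ihmaj
      fun Δ hΔc hΔp hΔ => ih Δ hΔc hΔp ?_
    exact hprev (by omega) _ (closedSeq_insert_iff.2 ⟨trivial, hΔc⟩)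
      ((positive_insert_prime_mu hlev.le hΔp).mono hk) hΔ

/-- In a `(k+1)`-positive sequent every `Ω`-rule of level `k+1` is an `Ω̃`-rule whose major
premise is itself `(k+1)`-positive; it collapses to an instance of its minor premise with
`Δ := Γ`, the major premise supplying the required derivation in `M^Ω_k`. -/
theorem collapse {c : Bool} {Γ : Sequent}
    (hprev : ∀ Δ, ClosedSeq Δ → Positive k Δ → prev Δ → OmDerAux prev k false Δ)
    (hd : OmDerAux (OmDerAux prev k false) (k + 1) c Γ) (hc : c = false)
    (hΓc : ClosedSeq Γ) (hΓp : Positive (k + 1) Γ) : OmDerAux prev k false Γ := by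
  induction hd with
  | ax c Γ i => exact .ax false Γ i
  | orR c Γ A B _ ih =>
    simp only [closedSeq_insert_iff, positive_insert_iff, ClosedF, isPositive_or] at hΓc hΓp
    exact .orR false Γ A B
      (ih hc (closedSeq_insert_iff.2 ⟨hΓc.1.1, closedSeq_insert_iff.2 ⟨hΓc.1.2, hΓc.2⟩⟩)
        (positive_insert_iff.2 ⟨hΓp.1.1, positive_insert_iff.2 ⟨hΓp.1.2, hΓp.2⟩⟩))
  | andR c Γ A B _ _ ih₁ ih₂ =>
    simp only [closedSeq_insert_iff, positive_insert_iff, ClosedF, isPositive_and] at hΓc hΓp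
    exact .andR false Γ A B
      (ih₁ hc (closedSeq_insert_iff.2 ⟨hΓc.1.1, hΓc.2⟩)
        (positive_insert_iff.2 ⟨hΓp.1.1, hΓp.2⟩))
      (ih₂ hc (closedSeq_insert_iff.2 ⟨hΓc.1.2, hΓc.2⟩)
        (positive_insert_iff.2 ⟨hΓp.1.2, hΓp.2⟩))
  | boxR c Γ S A _ ih =>
    simp only [closedSeq_union_iff, positive_union_iff, closedSeq_insert_iff, positive_insert_iff,
      closedSeq_image_dia_iff, positive_image_dia_iff, ClosedF, isPositive_box] at hΓc hΓp
    exact .boxR false Γ S A (ih hc (closedSeq_insert_iff.2 ⟨hΓc.2.1, hΓc.1⟩)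
      (positive_insert_iff.2 ⟨hΓp.2.1, hΓp.1⟩))
  | clo c Γ A _ ih =>
    simp only [closedSeq_insert_iff, positive_insert_iff] at hΓc hΓp
    exact .clo false Γ A (ih hc (closedSeq_insert_iff.2 ⟨closedF_subst A trivial, hΓc.2⟩)
      (positive_insert_iff.2 ⟨(isPositive_mu.1 hΓp.1).subst hΓp.1, hΓp.2⟩))
  | nuR c Γ A _ ih =>
    simp only [closedSeq_insert_iff, positive_insert_iff, isPositive_nu] at hΓc hΓp
    exact .nuR false Γ A fun i => ih i hc (closedSeq_insert_iff.2 ⟨closedF_iter A i, hΓc.2⟩)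
      (positive_insert_iff.2 ⟨isPositive_iter hΓp.1 i, hΓp.2⟩)
  | cut => cases hc
  | omega c Γ A h₀ h₁ _ hA₀ hlev _ ih =>
    obtain ⟨hAp, hΓp⟩ := positive_insert_iff.1 hΓp
    have hk : h₀ ≤ k := Nat.lt_succ_iff.1 (hlev ▸ hAp.lev_lt)
    refine .omega false Γ A h₀ h₁ hk hA₀ hlev fun Δ hΔc hΔp hΔ => ?_
    exact ih Δ hΔc hΔp (hprev _ (closedSeq_insert_iff.2 ⟨trivial, hΔc⟩)
      ((positive_insert_prime_mu hlev.le hΔp).mono hk) hΔ) hc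
      (closedSeq_union_iff.2 ⟨hΔc, (closedSeq_insert_iff.1 hΓc).2⟩)
      (positive_union_iff.2 ⟨hΔp.mono (by omega), hΓp⟩)
  | omegaT c Γ A h₀ h₁ hk₁ hA₀ hlev _ _ ihmaj ih =>
    have hmaj := ihmaj hc (closedSeq_insert_iff.2 ⟨trivial, hΓc⟩)
      (positive_insert_prime_mu (hlev.trans_le hk₁) hΓp)
    by_cases hk : h₀ ≤ k
    · refine .omegaT false Γ A h₀ h₁ hk hA₀ hlev hmaj fun Δ hΔc hΔp hΔ => ?_
      exact ih Δ hΔc hΔp (hprev _ (closedSeq_insert_iff.2 ⟨trivial, hΔc⟩)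
        ((positive_insert_prime_mu hlev.le hΔp).mono hk) hΔ) hc
        (closedSeq_union_iff.2 ⟨hΔc, hΓc⟩)
        (positive_union_iff.2 ⟨hΔp.mono (by omega), hΓp⟩)
    · obtain rfl : h₀ = k + 1 := by omega
      simpa using ih Γ hΓc hΓp hmaj hc (by simpa using hΓc) (by simpa using hΓp)

end OmDerAux

/-- The premises of the `Ω`-rules of `M^Ω_k` quantify over derivations in `M^Ω_{k-1}`, so
embedding `M^Ω_k` into `M^Ω_{k+1}` uses the collapse of `M^Ω_k` to `M^Ω_{k-1}`, and the
collapse of `M^Ω_{k+1}` to `M^Ω_k` uses the embedding of `M^Ω_{k-1}` into `M^Ω_k`. -/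
theorem omProv_mono_and_collapse :
    ∀ k, (∀ {c Γ}, OmProv k c Γ → OmProv (k + 1) c Γ) ∧
      ∀ {Γ}, ClosedSeq Γ → Positive (k + 1) Γ →
        OmProv (k + 1) false Γ → OmProv k false Γ
  | 0 =>
    ⟨OmDerAux.mono zero_le_one (absurd · (lt_irrefl 0)),
      fun hΓc hΓp hd =>
        OmDerAux.collapse (prev := fun _ => False) (fun _ _ _ h => h.elim) hd rfl hΓc hΓp⟩
  | k + 1 =>
    have ih := omProv_mono_and_collapse k
    ⟨OmDerAux.mono (Nat.le_succ _) fun _ _ hΔc hΔp => ih.2 hΔc hΔp,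
      fun hΓc hΓp hd =>
        OmDerAux.collapse (prev := OmProv k false) (fun _ _ _ => ih.1) hd rfl hΓc hΓp⟩

/-- Collapsing: if `h ≤ k` and `Γ` is an `(h+1)`-positive sequent
with a cut-free derivation in `M^Ω_k`, then `Γ` has a cut-free derivation in `M^Ω_h`. -/
theorem stmt10 (h k : ℕ) (hhk : h ≤ k) (Γ : Sequent)
    (hΓ : ClosedSeq Γ) (hp : Positive (h + 1) Γ)
    (hd : OmProv k false Γ) : OmProv h false Γ := by
  induction k, hhk using Nat.le_induction with
  | base => exact hd
  | succ k hhk ih => exact ih ((omProv_mono_and_collapse k).2 hΓ (hp.mono (by omega)) hd)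

end OneVarMu
end
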